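/- Let G be a directed graph, X, Y disjoint nonempty vertex sets, and let S* be the unique minimum X–Y separator with inclusion-wise maximal reach from X. Then for every important X–Y separator S, R⁺(X, G\S*) ⊆ R⁺(X, G\S). -/

import Mathlib

variable {V : Type*}

/-- A single edge step in `G \ S`: an edge of `E` with both endpoints outside `S`. -/
def DStep (E : V → V → Prop) (S : Set V) (a b : V) : Prop :=
  E a b ∧ a ∉ S ∧ b ∉ S

/-- `b` is reachable from `a` by a directed path in `G \ S`. -/
def DReach (E : V → V → Prop) (S : Set V) (a b : V) : Prop :=
  Relation.ReflTransGen (DStep E S) a b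

/-- The set of vertices reachable from the set `X` in `G \ S`. -/
def RSet (E : V → V → Prop) (S X : Set V) : Set V :=
  {v | ∃ x ∈ X, DReach E S x v}

/-- `S` is an `X`–`Y` separator: disjoint from `X ∪ Y` and destroying all `X → Y` paths. -/
def IsSep (E : V → V → Prop) (X Y S : Set V) : Prop :=
  S ∩ (X ∪ Y) = ∅ ∧ ∀ x ∈ X, ∀ y ∈ Y, ¬ DReach E S x y

/-- `S` is an inclusion-wise minimal `X`–`Y` separator. -/
def IsMinSep (E : V → V → Prop) (X Y S : Set V) : Prop :=
  IsSep E X Y S ∧ ∀ S', S' ⊂ S → ¬ IsSep E X Y S'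

/-- `S` is an important `X`–`Y` separator: a minimal separator such that no separator of at
most the same size has a strictly larger set of vertices reachable from `X`. -/
def IsImpSep (E : V → V → Prop) (X Y S : Set V) : Prop :=
  IsMinSep E X Y S ∧
    ¬ ∃ S', IsSep E X Y S' ∧ S'.ncard ≤ S.ncard ∧ RSet E S X ⊂ RSet E S' X

/-- `S` is a (vertex) multiway cut of `(G, T)`. -/
def IsMWC (E : V → V → Prop) (T S : Set V) : Prop :=
  S ∩ T = ∅ ∧ ∀ t₁ ∈ T, ∀ t₂ ∈ T, t₁ ≠ t₂ → ¬ DReach E S t₁ t₂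

/-- The forward shadow of `S` with respect to `T`: vertices outside `S ∪ T` not reachable
from `T` in `G \ S`. -/
def fShadow (E : V → V → Prop) (T S : Set V) : Set V :=
  {v | v ∉ S ∧ v ∉ T ∧ ∀ t ∈ T, ¬ DReach E S t v}

/-- The reverse shadow of `S` with respect to `T`: vertices outside `S ∪ T` that cannot
reach `T` in `G \ S`. -/
def rShadow (E : V → V → Prop) (T S : Set V) : Set V :=
  {v | v ∉ S ∧ v ∉ T ∧ ∀ t ∈ T, ¬ DReach E S v t}

/-- The adjacency of `torso(G, C)`: an edge `(a, b)` whenever `a, b ∈ C` and `G` has a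
directed `a → b` path whose internal vertices all lie outside `C`. -/
def TorsoAdj (E : V → V → Prop) (C : Set V) (a b : V) : Prop :=
  a ∈ C ∧ b ∈ C ∧ ∃ w, E a w ∧ Relation.ReflTransGen (fun x y => x ∉ C ∧ E x y) w b

/-!
If `S*` is a minimum separator and `S` any separator, with reach sets `R* = R⁺(X, G∖S*)` and
`R = R⁺(X, G∖S)`, then the vertices of `S ∪ S*` outside `R ∪ R*` form a separator `U` whose
reach contains `R ∪ R*`, and the remaining vertices of `S ∪ S*` (counting `S ∩ S*` twice)
form a separator bounding `R ∩ R*`. Hence `|U| + |S*| ≤ |U| + |rest| = |S| + |S*|`, i.e.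
`|U| ≤ |S|`. If `R*` were not contained in `R`, the reach of `U` would strictly contain `R`,
so `S` would not be important.
-/

section Reach

variable {E : V → V → Prop} {X Y S T : Set V}

lemma self_subset_RSet : X ⊆ RSet E S X :=
  fun x hx => ⟨x, hx, Relation.ReflTransGen.refl⟩

lemma mem_RSet_of_step {v w : V} (hv : v ∈ RSet E S X) (h : DStep E S v w) :
    w ∈ RSet E S X := by
  obtain ⟨x, hx, hxv⟩ := hv
  exact ⟨x, hx, hxv.tail h⟩

lemma notMem_of_mem_RSet (hX : Disjoint X S) {v : V} (hv : v ∈ RSet E S X) : v ∉ S := by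
  obtain ⟨x, hx, hxv⟩ := hv
  induction hxv with
  | refl => exact hX.notMem_of_mem_left hx
  | tail _ h _ => exact h.2.2

lemma mem_RSet_of_edge (hX : Disjoint X S) {v w : V} (hv : v ∈ RSet E S X) (hvw : E v w)
    (hw : w ∉ S) : w ∈ RSet E S X :=
  mem_RSet_of_step hv ⟨hvw, notMem_of_mem_RSet hX hv, hw⟩

lemma DReach.mem_of_forall_step_mem {A : Set V} {x v : V}
    (hA : ∀ a ∈ A, ∀ b, DStep E S a b → b ∈ A) (hx : x ∈ A) (h : DReach E S x v) : v ∈ A := by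
  induction h with
  | refl => exact hx
  | tail _ hstep ih => exact hA _ ih _ hstep

lemma RSet_subset_RSet_of_disjoint (h : Disjoint (RSet E S X) T) :
    RSet E S X ⊆ RSet E T X := by
  rintro v ⟨x, hx, hxv⟩
  induction hxv with
  | refl => exact self_subset_RSet hx
  | @tail b c hxb hbc ih =>
      exact mem_RSet_of_step ih
        ⟨hbc.1, h.notMem_of_mem_left ⟨x, hx, hxb⟩, h.notMem_of_mem_left ⟨x, hx, hxb.tail hbc⟩⟩

end Reach

section Separator

variable {E : V → V → Prop} {X Y S T : Set V}

lemma IsSep.disjoint (h : IsSep E X Y S) : Disjoint S (X ∪ Y) :=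
  Set.disjoint_iff_inter_eq_empty.mpr h.1

lemma IsSep.disjoint_left (h : IsSep E X Y S) : Disjoint X S :=
  (h.disjoint.mono_right Set.subset_union_left).symm

lemma IsSep.disjoint_RSet_right (h : IsSep E X Y S) : Disjoint (RSet E S X) Y :=
  Set.disjoint_left.mpr fun _ ⟨x, hx, hxy⟩ hy => h.2 x hx _ hy hxy

lemma isSep_of_forall_step_mem {A : Set V} (hS : Disjoint S (X ∪ Y)) (hXA : X ⊆ A)
    (hAY : Disjoint A Y) (hA : ∀ a ∈ A, ∀ b, DStep E S a b → b ∈ A) : IsSep E X Y S :=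
  ⟨Set.disjoint_iff_inter_eq_empty.mp hS, fun _ hx _ hy hxy =>
    hAY.notMem_of_mem_left (hxy.mem_of_forall_step_mem hA (hXA hx)) hy⟩

lemma IsSep.disjoint_of_subset_union {U : Set V} (hS : IsSep E X Y S) (hT : IsSep E X Y T)
    (hU : U ⊆ S ∪ T) : Disjoint U (X ∪ Y) :=
  (Set.disjoint_union_left.mpr ⟨hS.disjoint, hT.disjoint⟩).mono_left hU

end Separator

/-- The vertices of `S ∪ T` outside both reach sets: a separator whose reach contains
`R_S ∪ R_T`. -/
def reachUnionSep (E : V → V → Prop) (X S T : Set V) : Set V :=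
  (S ∪ T) \ (RSet E S X ∪ RSet E T X)

/-- The rest of `S ∪ T`, with `S ∩ T` kept: the boundary of `R_S ∩ R_T`. -/
def reachInterSep (E : V → V → Prop) (X S T : Set V) : Set V :=
  S ∩ RSet E T X ∪ T ∩ RSet E S X ∪ S ∩ T

section Uncrossing

variable {E : V → V → Prop} {X Y S T : Set V}

lemma reachUnionSep_subset : reachUnionSep E X S T ⊆ S ∪ T :=
  Set.sdiff_subset

lemma reachInterSep_subset : reachInterSep E X S T ⊆ S ∪ T := by
  rintro v ((⟨hv, -⟩ | ⟨hv, -⟩) | ⟨hv, -⟩)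
  exacts [Or.inl hv, Or.inr hv, Or.inl hv]

lemma isSep_reachUnionSep (hS : IsSep E X Y S) (hT : IsSep E X Y T) :
    IsSep E X Y (reachUnionSep E X S T) := by
  refine isSep_of_forall_step_mem (hS.disjoint_of_subset_union hT reachUnionSep_subset)
    (self_subset_RSet.trans Set.subset_union_left)
    (Set.disjoint_union_left.mpr ⟨hS.disjoint_RSet_right, hT.disjoint_RSet_right⟩) ?_
  rintro a ha b ⟨hab, -, hbU⟩
  by_contra hb
  have hb_out : ∀ {W}, W ⊆ S ∪ T → b ∉ W := fun hW hbW => hbU ⟨hW hbW, hb⟩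
  rcases ha with ha | ha
  · exact hb (Or.inl (mem_RSet_of_edge hS.disjoint_left ha hab
      (hb_out Set.subset_union_left)))
  · exact hb (Or.inr (mem_RSet_of_edge hT.disjoint_left ha hab
      (hb_out Set.subset_union_right)))

lemma isSep_reachInterSep (hS : IsSep E X Y S) (hT : IsSep E X Y T) :
    IsSep E X Y (reachInterSep E X S T) := by
  refine isSep_of_forall_step_mem (A := RSet E S X ∩ RSet E T X)
    (hS.disjoint_of_subset_union hT reachInterSep_subset) (Set.subset_inter self_subset_RSet self_subset_RSet)
    (hS.disjoint_RSet_right.mono_left Set.inter_subset_left) ?_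
  rintro a ⟨haS, haT⟩ b ⟨hab, -, hbI⟩
  have hbS : b ∉ S := fun hbS =>
    have hbT : b ∉ T := fun hbT => hbI (Or.inr ⟨hbS, hbT⟩)
    hbI (Or.inl (Or.inl ⟨hbS, mem_RSet_of_edge hT.disjoint_left haT hab hbT⟩))
  have hbT : b ∉ T := fun hbT =>
    hbI (Or.inl (Or.inr ⟨hbT, mem_RSet_of_edge hS.disjoint_left haS hab hbS⟩))
  exact ⟨mem_RSet_of_edge hS.disjoint_left haS hab hbS,
    mem_RSet_of_edge hT.disjoint_left haT hab hbT⟩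

lemma reachUnionSep_union_reachInterSep (hS : Disjoint X S) (hT : Disjoint X T) :
    reachUnionSep E X S T ∪ reachInterSep E X S T = S ∪ T := by
  refine Set.Subset.antisymm (Set.union_subset reachUnionSep_subset reachInterSep_subset) ?_
  rintro v (hv | hv)
  · by_cases hvT : v ∈ RSet E T X
    · exact Or.inr (Or.inl (Or.inl ⟨hv, hvT⟩))
    · exact Or.inl ⟨Or.inl hv, by rintro (h | h); exacts [notMem_of_mem_RSet hS h hv, hvT h]⟩
  · by_cases hvS : v ∈ RSet E S X
    · exact Or.inr (Or.inl (Or.inr ⟨hv, hvS⟩))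
    · exact Or.inl ⟨Or.inr hv, by rintro (h | h); exacts [hvS h, notMem_of_mem_RSet hT h hv]⟩

lemma reachUnionSep_inter_reachInterSep (hS : Disjoint X S) (hT : Disjoint X T) :
    reachUnionSep E X S T ∩ reachInterSep E X S T = S ∩ T := by
  apply Set.Subset.antisymm
  · rintro v ⟨⟨-, hv⟩, (⟨-, hvT⟩ | ⟨-, hvS⟩) | hST⟩
    exacts [absurd (Or.inr hvT) hv, absurd (Or.inl hvS) hv, hST]
  · rintro v ⟨hvS, hvT⟩
    refine ⟨⟨Or.inl hvS, ?_⟩, Or.inr ⟨hvS, hvT⟩⟩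
    rintro (h | h)
    exacts [notMem_of_mem_RSet hS h hvS, notMem_of_mem_RSet hT h hvT]

lemma ncard_reachUnionSep_add_ncard_reachInterSep (hS : Disjoint X S) (hT : Disjoint X T)
    (hSf : S.Finite) (hTf : T.Finite) :
    (reachUnionSep E X S T).ncard + (reachInterSep E X S T).ncard = S.ncard + T.ncard := by
  rw [← Set.ncard_union_add_ncard_inter _ _ ((hSf.union hTf).subset reachUnionSep_subset)
      ((hSf.union hTf).subset reachInterSep_subset),
    reachUnionSep_union_reachInterSep hS hT, reachUnionSep_inter_reachInterSep hS hT,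
    Set.ncard_union_add_ncard_inter _ _ hSf hTf]

lemma RSet_subset_RSet_reachUnionSep_left :
    RSet E S X ⊆ RSet E (reachUnionSep E X S T) X :=
  RSet_subset_RSet_of_disjoint <| Set.disjoint_left.mpr fun _ hv hvU => hvU.2 (Or.inl hv)

lemma RSet_subset_RSet_reachUnionSep_right :
    RSet E T X ⊆ RSet E (reachUnionSep E X S T) X :=
  RSet_subset_RSet_of_disjoint <| Set.disjoint_left.mpr fun _ hv hvU => hvU.2 (Or.inr hv)

end Uncrossing

theorem important_separator_behind_min_separator_general [Fintype V]
    (E : V → V → Prop) (X Y Sstar : Set V)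
    (hsep : IsSep E X Y Sstar)
    (hmin : ∀ S, IsSep E X Y S → Sstar.ncard ≤ S.ncard) :
    ∀ S, IsImpSep E X Y S → RSet E Sstar X ⊆ RSet E S X := by
  rintro S ⟨⟨hS, -⟩, hbest⟩ v hv
  by_contra hvS
  have hcard : (reachUnionSep E X S Sstar).ncard ≤ S.ncard := by
    have := ncard_reachUnionSep_add_ncard_reachInterSep (E := E) hS.disjoint_left hsep.disjoint_left
      (Set.toFinite S) (Set.toFinite Sstar)
    have := hmin _ (isSep_reachInterSep hS hsep)
    omega
  refine hbest ⟨_, isSep_reachUnionSep hS hsep, hcard, ?_⟩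
  exact (Set.ssubset_iff_of_subset RSet_subset_RSet_reachUnionSep_left).mpr
    ⟨v, RSet_subset_RSet_reachUnionSep_right hv, hvS⟩

/-- Every important `X`–`Y` separator is "behind" the unique minimum
`X`–`Y` separator `S*` with inclusion-wise maximal reach: `R⁺(X, G∖S*) ⊆ R⁺(X, G∖S)`. -/
theorem important_separator_behind_min_separator [Fintype V]
    (E : V → V → Prop) (X Y Sstar : Set V)
    (hsep : IsSep E X Y Sstar)
    (hmin : ∀ S, IsSep E X Y S → Sstar.ncard ≤ S.ncard)
    (hmax : ∀ S, IsSep E X Y S → S.ncard = Sstar.ncard → RSet E S X ⊆ RSet E Sstar X) :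
    ∀ S, IsImpSep E X Y S → RSet E Sstar X ⊆ RSet E S X :=
  important_separator_behind_min_separator_general E X Y Sstar hsep hmin
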